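/- There exists a constant η₀ > 0, depending only on n, p, q, s, such that: (a) for every admissible function u on ℝ^n with ‖∇u‖_p > 0 and ‖u‖_s > 0, inf{F(τ_λ u) : λ > 0} = η₀ · G(u)^k, where k = q(np + ps − ns)/(np + pq − ns), and the infimum is attained; and (b) consequently φ(1) = inf{F(u) : u admissible, ‖u‖_q = 1} = η₀ · G^k, where G is the optimal Gagliardo–Nirenberg–Sobolev constant. -/

import Mathlib

open MeasureTheory Real Set

noncomputable section

abbrev Euc (n : ℕ) := EuclideanSpace ℝ (Fin n)

/-- The `L^r` norm of `u : ℝⁿ → ℝ` with respect to Lebesgue measure. -/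
def lpNorm (n : ℕ) (r : ℝ) (u : Euc n → ℝ) : ℝ :=
  (∫ x : Euc n, |u x| ^ r) ^ (1 / r)

/-- The `L^p` norm of the gradient of `u`. -/
def gradLpNorm (n : ℕ) (p : ℝ) (u : Euc n → ℝ) : ℝ :=
  (∫ x : Euc n, ‖fderiv ℝ u x‖ ^ p) ^ (1 / p)

/-- `u ∈ D^{p,s}(ℝⁿ)`: continuously differentiable with finite `L^s`, `L^q` and gradient `L^p`
norms. -/
structure Admissible (n : ℕ) (p s q : ℝ) (u : Euc n → ℝ) : Prop where
  smooth : ContDiff ℝ 1 u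
  int_s : Integrable (fun x : Euc n => |u x| ^ s)
  int_q : Integrable (fun x : Euc n => |u x| ^ q)
  int_grad : Integrable (fun x : Euc n => ‖fderiv ℝ u x‖ ^ p)

/-- The standing assumptions on the parameters `n, p, s, q, θ`. -/
structure Params (n : ℕ) (p s q θ : ℝ) : Prop where
  hn : 2 ≤ n
  hp : 1 < p
  hpn : p < n
  hs : 1 ≤ s
  hsq : s < q
  hq : q < n * p / (n - p)
  hθ0 : 0 < θ
  hθ1 : θ < 1
  hθ : θ / (n * p / (n - p)) + (1 - θ) / s = 1 / q

/-- The GNS quotient `‖∇u‖_p^θ ‖u‖_s^{1-θ} / ‖u‖_q`. -/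
def GNSRatio (n : ℕ) (p s q θ : ℝ) (u : Euc n → ℝ) : ℝ :=
  gradLpNorm n p u ^ θ * lpNorm n s u ^ (1 - θ) / lpNorm n q u

/-- The optimal Gagliardo–Nirenberg–Sobolev constant. -/
def GNSconst (n : ℕ) (p s q θ : ℝ) : ℝ :=
  sInf {c | ∃ u : Euc n → ℝ, Admissible n p s q u ∧ u ≠ 0 ∧ c = GNSRatio n p s q θ u}

/-- The GNS deficit `δ(u)`. -/
def deficit (n : ℕ) (p s q θ : ℝ) (u : Euc n → ℝ) : ℝ :=
  gradLpNorm n p u ^ θ * lpNorm n s u ^ (1 - θ) / (GNSconst n p s q θ * lpNorm n q u) - 1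

/-- `v` is an optimizer for the GNS inequality. -/
def IsOptimizer (n : ℕ) (p s q θ : ℝ) (v : Euc n → ℝ) : Prop :=
  Admissible n p s q v ∧ v ≠ 0 ∧
    gradLpNorm n p v ^ θ * lpNorm n s v ^ (1 - θ) = GNSconst n p s q θ * lpNorm n q v

/-- `v` is radially symmetric with non-increasing profile about the point `x₀`. -/
def IsCenter (n : ℕ) (v : Euc n → ℝ) (x₀ : Euc n) : Prop :=
  ∃ f : ℝ → ℝ, AntitoneOn f (Ici 0) ∧ ∀ x, v x = f ‖x - x₀‖

/-- The asymmetry `λ(u)`. -/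
def asym (n : ℕ) (p s q θ : ℝ) (u : Euc n → ℝ) : ℝ :=
  sInf {r | ∃ v : Euc n → ℝ, IsOptimizer n p s q θ v ∧ lpNorm n q v = lpNorm n q u ∧
    r = lpNorm n q (u - v) ^ q / lpNorm n q u ^ q}

/-- The relative asymmetry `λ(u|S)`: only optimizers whose center lies in `S` compete. -/
def relAsym (n : ℕ) (p s q θ : ℝ) (u : Euc n → ℝ) (S : Set (Euc n)) : ℝ :=
  sInf {r | ∃ (v : Euc n → ℝ) (x₀ : Euc n), IsOptimizer n p s q θ v ∧ IsCenter n v x₀ ∧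
    x₀ ∈ S ∧ lpNorm n q v = lpNorm n q u ∧
    r = lpNorm n q (u - v) ^ q / lpNorm n q u ^ q}

/-- `u` is radial non-increasing: `u(x) = f(|x|)` for a non-increasing `f : [0,∞) → [0,∞)`. -/
def RadialNonincreasing (n : ℕ) (u : Euc n → ℝ) : Prop :=
  ∃ f : ℝ → ℝ, AntitoneOn f (Ici 0) ∧ (∀ r ∈ Ici (0 : ℝ), 0 ≤ f r) ∧ ∀ x, u x = f ‖x‖

/-- Orthogonal reflection across the hyperplane `{x | ⟪v,x⟫ = c}` (for `‖v‖ = 1`). -/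
def reflAcross (n : ℕ) (v : Euc n) (c : ℝ) (x : Euc n) : Euc n :=
  x - (2 * ((inner ℝ v x : ℝ) - c)) • v

/-- `u` is invariant under the reflections across `k` mutually orthogonal hyperplanes with
unit normals `v i` and offsets `c i`. -/
def SymmetricAcrossOrtho (n k : ℕ) (u : Euc n → ℝ) (v : Fin k → Euc n) (c : Fin k → ℝ) : Prop :=
  (∀ i, ‖v i‖ = 1) ∧ (Pairwise fun i j => (inner ℝ (v i) (v j) : ℝ) = 0) ∧
    ∀ (i : Fin k) (x : Euc n), u (reflAcross n (v i) (c i) x) = u x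

/-- `u` is `k`-symmetric. -/
def NSym (n k : ℕ) (u : Euc n → ℝ) : Prop :=
  ∃ (v : Fin k → Euc n) (c : Fin k → ℝ), SymmetricAcrossOrtho n k u v c

/-- The rescaling `τ_λ u (x) = λ^{n/q} u (λ x)`, which preserves the `L^q` norm. -/
def rescale (n : ℕ) (q lam : ℝ) (u : Euc n → ℝ) : Euc n → ℝ :=
  fun x => lam ^ ((n : ℝ) / q) * u (lam • x)

/-- The functional `F(u) = ∫ |∇u|^p + ∫ |u|^s`. -/
def Ffun (n : ℕ) (p s : ℝ) (u : Euc n → ℝ) : ℝ :=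
  (∫ x : Euc n, ‖fderiv ℝ u x‖ ^ p) + ∫ x : Euc n, |u x| ^ s

/-- The functional `G(u) = ‖∇u‖_p^θ ‖u‖_s^{1-θ}`. -/
def Gfun (n : ℕ) (p s θ : ℝ) (u : Euc n → ℝ) : ℝ :=
  gradLpNorm n p u ^ θ * lpNorm n s u ^ (1 - θ)

/-- `φ(m) = inf {F(u) : ‖u‖_q^q = m}`. -/
def phi (n : ℕ) (p s q : ℝ) (m : ℝ) : ℝ :=
  sInf {c | ∃ u : Euc n → ℝ, Admissible n p s q u ∧ lpNorm n q u ^ q = m ∧ c = Ffun n p s u}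

/-- Volume of the unit ball in `ℝⁿ`. -/
def unitBallVol (n : ℕ) : ℝ := (volume (Metric.ball (0 : Euc n) 1)).toReal

/-- The spherically symmetric decreasing rearrangement `u^⋆`. -/
def rearr (n : ℕ) (u : Euc n → ℝ) : Euc n → ℝ :=
  fun x => sInf {t : ℝ | 0 < t ∧
    volume {y : Euc n | t < |u y|} ≤ ENNReal.ofReal (unitBallVol n * ‖x‖ ^ (n : ℝ))}

/-- The Pólya–Szegő deficit. -/
def deltaPS (n : ℕ) (p : ℝ) (u : Euc n → ℝ) : ℝ :=
  (gradLpNorm n p u - gradLpNorm n p (rearr n u)) / gradLpNorm n p (rearr n u)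

/-- `u` is symmetric with respect to each coordinate hyperplane `{x_i = 0}`. -/
def CoordSym (n : ℕ) (u : Euc n → ℝ) : Prop :=
  ∀ (i : Fin n) (x : Euc n), u (WithLp.toLp 2 (Function.update (WithLp.ofLp x) i (-(x i)))) = u x

/-!
The rescaling `τ_λ` preserves `‖u‖_q` and multiplies `∫ |∇u|^p` by `λ^a` and `∫ |u|^s` by
`λ^(-b)`, where `a = p (n/q + 1) - n` and `b = n - s n/q` are positive. Minimizing
`A λ^a + B λ^(-b)` over `λ > 0` by weighted AM–GM gives `η₀ A^(b/(a+b)) B^(a/(a+b))`, and the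
relation defining `θ` turns this into `η₀ G(u)^k`.

For `φ(1)`: every `u` with `‖u‖_q = 1` has `F(u) ≥ η₀ G(u)^k ≥ η₀ G^k`, while normalizing any
admissible `u ≠ 0` in `L^q` and moving it to the optimal point of its orbit gives a `u'` with
`‖u'‖_q = 1` and `F(u') = η₀ (G(u)/‖u‖_q)^k`. As `x ↦ η₀ x^k` is continuous and increasing, the
two infima agree.
-/

def scalingConst (α β : ℝ) : ℝ :=
  ((α + β) / β) ^ (β / (α + β)) * ((α + β) / α) ^ (α / (α + β))

/-- Weighted AM–GM with weights `β/(α+β)`, `α/(α+β)` applied to `(α+β)/β · A l^α` and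
`(α+β)/α · B l^(-β)`, whose weighted geometric mean does not depend on `l`; equality holds where
the two terms agree, i.e. at `l^(α+β) = βB/(αA)`. -/
theorem isLeast_mul_rpow_add_mul_rpow_neg {α β A B : ℝ} (hα : 0 < α) (hβ : 0 < β) (hA : 0 < A)
    (hB : 0 < B) :
    IsLeast {r | ∃ l > (0 : ℝ), r = A * l ^ α + B * l ^ (-β)}
      (scalingConst α β * (A ^ (β / (α + β)) * B ^ (α / (α + β)))) := by
  have hγ : 0 < α + β := by linarith
  set γ := α + β
  have hweights : β / γ + α / γ = 1 := by field_simp; ring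
  set x : ℝ → ℝ := fun l => γ / β * (A * l ^ α)
  set y : ℝ → ℝ := fun l => γ / α * (B * l ^ (-β))
  have hmean : ∀ l > (0 : ℝ), β / γ * x l + α / γ * y l = A * l ^ α + B * l ^ (-β) := by
    intro l _
    simp only [x, y]
    field_simp
  have hgeom : ∀ l > (0 : ℝ), x l ^ (β / γ) * y l ^ (α / γ) =
      scalingConst α β * (A ^ (β / γ) * B ^ (α / γ)) := by
    intro l hl
    have hl_cancel : l ^ (α * (β / γ)) * l ^ (-β * (α / γ)) = 1 := by
      rw [← Real.rpow_add hl, show α * (β / γ) + -β * (α / γ) = 0 by ring, Real.rpow_zero]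
    simp only [x, y, scalingConst]
    rw [Real.mul_rpow (by positivity) (by positivity), Real.mul_rpow hA.le (by positivity),
      Real.mul_rpow (by positivity) (by positivity), Real.mul_rpow hB.le (by positivity),
      ← Real.rpow_mul hl.le, ← Real.rpow_mul hl.le]
    linear_combination ((γ / β) ^ (β / γ) * (γ / α) ^ (α / γ) * (A ^ (β / γ) * B ^ (α / γ)))
      * hl_cancel
  refine ⟨?_, ?_⟩
  · set l₀ := (β * B / (α * A)) ^ (1 / γ)
    have hl₀ : 0 < l₀ := by positivity
    have hl₀_pow : l₀ ^ α = β * B / (α * A) * l₀ ^ (-β) := by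
      have hl₀_γ : l₀ ^ γ = β * B / (α * A) := by
        rw [← Real.rpow_mul (by positivity), one_div_mul_cancel hγ.ne', Real.rpow_one]
      calc l₀ ^ α = l₀ ^ (γ + -β) := by congr 1; ring
        _ = β * B / (α * A) * l₀ ^ (-β) := by rw [Real.rpow_add hl₀, hl₀_γ]
    have hxy : x l₀ = y l₀ := by
      simp only [x, y]
      rw [hl₀_pow]
      field_simp
    refine ⟨l₀, hl₀, ?_⟩
    rw [← hgeom l₀ hl₀, ← hmean l₀ hl₀, hxy, ← Real.rpow_add (by positivity), hweights,
      Real.rpow_one, ← add_mul, hweights, one_mul]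
  · rintro r ⟨l, hl, rfl⟩
    rw [← hgeom l hl, ← hmean l hl]
    exact Real.geom_mean_le_arith_mean2_weighted (by positivity) (by positivity)
      (by positivity) (by positivity) hweights

section Rescaling

variable {n : ℕ} {q lam : ℝ} {u : Euc n → ℝ}

lemma rescale_one (u : Euc n → ℝ) : rescale n q 1 u = u := by
  funext x
  simp [rescale]

lemma fderiv_rescale (hu : Differentiable ℝ u) (x : Euc n) :
    fderiv ℝ (rescale n q lam u) x = (lam ^ ((n : ℝ) / q) * lam) • fderiv ℝ u (lam • x) := by
  have hcomp : HasFDerivAt (fun y : Euc n => u (lam • y))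
      ((fderiv ℝ u (lam • x)).comp (lam • ContinuousLinearMap.id ℝ (Euc n))) x :=
    (hu (lam • x)).hasFDerivAt.comp x ((hasFDerivAt_id x).const_smul lam)
  unfold rescale
  rw [(hcomp.const_mul (lam ^ ((n : ℝ) / q))).fderiv, mul_smul]
  ext y
  simp

lemma abs_rescale_rpow (hlam : 0 < lam) (r : ℝ) (x : Euc n) :
    |rescale n q lam u x| ^ r = (lam ^ ((n : ℝ) / q)) ^ r * |u (lam • x)| ^ r := by
  rw [rescale, abs_mul, abs_of_pos (by positivity), Real.mul_rpow (by positivity) (abs_nonneg _)]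

lemma norm_fderiv_rescale_rpow (hlam : 0 < lam) (hu : Differentiable ℝ u) (r : ℝ) (x : Euc n) :
    ‖fderiv ℝ (rescale n q lam u) x‖ ^ r =
      (lam ^ ((n : ℝ) / q) * lam) ^ r * ‖fderiv ℝ u (lam • x)‖ ^ r := by
  rw [fderiv_rescale hu, norm_smul, Real.norm_of_nonneg (by positivity),
    Real.mul_rpow (by positivity) (norm_nonneg _)]

lemma integral_rpow_mul_comp_smul (hlam : 0 < lam) (c r : ℝ) (g : Euc n → ℝ) :
    ∫ x : Euc n, (lam ^ c) ^ r * g (lam • x) = lam ^ (r * c - n) * ∫ x : Euc n, g x := by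
  rw [integral_const_mul, Measure.integral_comp_smul_of_nonneg volume g lam (hR := hlam.le),
    finrank_euclideanSpace_fin, smul_eq_mul, ← mul_assoc, ← Real.rpow_mul hlam.le,
    ← Real.rpow_natCast, ← Real.rpow_neg hlam.le, ← Real.rpow_add hlam, mul_comm c r,
    sub_eq_add_neg]

lemma integral_abs_rescale_rpow (hlam : 0 < lam) (r : ℝ) (u : Euc n → ℝ) :
    ∫ x : Euc n, |rescale n q lam u x| ^ r = lam ^ (r * (n / q) - n) * ∫ x : Euc n, |u x| ^ r := by
  simp_rw [abs_rescale_rpow hlam]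
  exact integral_rpow_mul_comp_smul hlam _ r (fun y => |u y| ^ r)

lemma integral_norm_fderiv_rescale_rpow (hlam : 0 < lam) (hu : Differentiable ℝ u) (r : ℝ) :
    ∫ x : Euc n, ‖fderiv ℝ (rescale n q lam u) x‖ ^ r =
      lam ^ (r * (n / q + 1) - n) * ∫ x : Euc n, ‖fderiv ℝ u x‖ ^ r := by
  have hlam_pow : lam ^ ((n : ℝ) / q) * lam = lam ^ ((n : ℝ) / q + 1) := by
    rw [Real.rpow_add hlam, Real.rpow_one]
  simp_rw [norm_fderiv_rescale_rpow hlam hu, hlam_pow]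
  exact integral_rpow_mul_comp_smul hlam _ r (fun y => ‖fderiv ℝ u y‖ ^ r)

lemma lpNorm_rescale (hq : q ≠ 0) (hlam : 0 < lam) (u : Euc n → ℝ) :
    lpNorm n q (rescale n q lam u) = lpNorm n q u := by
  rw [_root_.lpNorm, integral_abs_rescale_rpow hlam, mul_div_cancel₀ _ hq, sub_self,
    Real.rpow_zero, one_mul, _root_.lpNorm]

lemma Admissible.rescale {p s : ℝ} (hu : Admissible n p s q u) (hlam : 0 < lam) :
    Admissible n p s q (rescale n q lam u) where
  smooth := contDiff_const.mul (hu.smooth.comp (contDiff_id.const_smul lam))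
  int_s := by
    simp_rw [abs_rescale_rpow hlam]
    exact (hu.int_s.comp_smul hlam.ne').const_mul _
  int_q := by
    simp_rw [abs_rescale_rpow hlam]
    exact (hu.int_q.comp_smul hlam.ne').const_mul _
  int_grad := by
    simp_rw [norm_fderiv_rescale_rpow hlam (hu.smooth.differentiable one_ne_zero)]
    exact (hu.int_grad.comp_smul hlam.ne').const_mul _

end Rescaling

section Homogeneity

variable {n : ℕ} {p s q θ : ℝ} {u : Euc n → ℝ}

lemma integral_abs_mul_rpow_rpow {f : Euc n → ℝ} (hf : 0 ≤ f) {r : ℝ} (hr : r ≠ 0)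
    (a : ℝ) : (∫ x, (|a| * f x) ^ r) ^ (1 / r) = |a| * (∫ x, f x ^ r) ^ (1 / r) := by
  simp_rw [Real.mul_rpow (abs_nonneg a) (hf _)]
  rw [integral_const_mul, Real.mul_rpow (by positivity) (integral_nonneg fun x => by
    simpa using Real.rpow_nonneg (hf x) r), ← Real.rpow_mul (abs_nonneg a), mul_one_div_cancel hr,
    Real.rpow_one]

lemma lpNorm_const_mul {r : ℝ} (hr : r ≠ 0) (a : ℝ) (u : Euc n → ℝ) :
    lpNorm n r (fun x => a * u x) = |a| * lpNorm n r u := by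
  simp only [_root_.lpNorm, abs_mul]
  exact integral_abs_mul_rpow_rpow (fun x => abs_nonneg (u x)) hr a

lemma gradLpNorm_const_mul (hp : p ≠ 0) (a : ℝ) (hu : Differentiable ℝ u) :
    gradLpNorm n p (fun x => a * u x) = |a| * gradLpNorm n p u := by
  simp only [gradLpNorm, fderiv_const_mul (hu _), norm_smul, Real.norm_eq_abs]
  exact integral_abs_mul_rpow_rpow (fun x => norm_nonneg (fderiv ℝ u x)) hp a

lemma Gfun_const_mul (hp : p ≠ 0) (hs : s ≠ 0) (a : ℝ) (hu : Differentiable ℝ u) :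
    Gfun n p s θ (fun x => a * u x) = |a| * Gfun n p s θ u := by
  have hgrad : 0 ≤ gradLpNorm n p u := Real.rpow_nonneg (integral_nonneg fun x =>
    Real.rpow_nonneg (norm_nonneg _) _) _
  have hlp : 0 ≤ lpNorm n s u := Real.rpow_nonneg (integral_nonneg fun x =>
    Real.rpow_nonneg (abs_nonneg _) _) _
  rw [Gfun, Gfun, gradLpNorm_const_mul hp a hu, lpNorm_const_mul hs,
    Real.mul_rpow (abs_nonneg a) hgrad, Real.mul_rpow (abs_nonneg a) hlp]
  calc |a| ^ θ * gradLpNorm n p u ^ θ * (|a| ^ (1 - θ) * lpNorm n s u ^ (1 - θ))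
      = |a| ^ (θ + (1 - θ)) * (gradLpNorm n p u ^ θ * lpNorm n s u ^ (1 - θ)) := by
        rw [Real.rpow_add' (abs_nonneg a) (by norm_num)]
        ring
    _ = _ := by rw [add_sub_cancel, Real.rpow_one]

lemma Admissible.const_mul (hu : Admissible n p s q u) (a : ℝ) :
    Admissible n p s q (fun x => a * u x) where
  smooth := contDiff_const.mul hu.smooth
  int_s := by
    simp_rw [abs_mul, Real.mul_rpow (abs_nonneg a) (abs_nonneg _)]
    exact hu.int_s.const_mul _
  int_q := by
    simp_rw [abs_mul, Real.mul_rpow (abs_nonneg a) (abs_nonneg _)]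
    exact hu.int_q.const_mul _
  int_grad := by
    simp_rw [fderiv_const_mul (hu.smooth.differentiable one_ne_zero _), norm_smul,
      Real.norm_eq_abs, Real.mul_rpow (abs_nonneg a) (norm_nonneg _)]
    exact hu.int_grad.const_mul _

end Homogeneity

section Positivity

variable {n : ℕ} {p s q : ℝ} {u : Euc n → ℝ}

lemma integral_pos_of_continuous {X : Type*} [TopologicalSpace X] [MeasurableSpace X]
    [OpensMeasurableSpace X] {μ : Measure X} [μ.IsOpenPosMeasure] {g : X → ℝ}
    (hg : Continuous g) (hg_nonneg : 0 ≤ g) (hg_int : Integrable g μ) {x₀ : X} (hx₀ : g x₀ ≠ 0) :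
    0 < ∫ x, g x ∂μ :=
  (integral_pos_iff_support_of_nonneg hg_nonneg hg_int).2
    (hg.isOpen_support.measure_pos μ ⟨x₀, hx₀⟩)

lemma lpNorm_zero {r : ℝ} (hr : r ≠ 0) : lpNorm n r 0 = 0 := by
  simp [_root_.lpNorm, Real.zero_rpow hr, Real.zero_rpow (inv_ne_zero hr)]

lemma lpNorm_pos {r : ℝ} (hr : 0 < r) (hu : Continuous u)
    (hu_int : Integrable fun x => |u x| ^ r) (hu_ne : u ≠ 0) : 0 < lpNorm n r u := by
  obtain ⟨x₀, hx₀⟩ := Function.ne_iff.mp hu_ne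
  refine Real.rpow_pos_of_pos (integral_pos_of_continuous (hu.abs.rpow_const fun _ => .inr hr.le)
    (fun x => Real.rpow_nonneg (abs_nonneg _) _) hu_int (x₀ := x₀) ?_) _
  exact (Real.rpow_pos_of_pos (abs_pos.2 hx₀) r).ne'

/-- Otherwise `u` would be a nonzero constant, which is not integrable on `ℝⁿ`. -/
lemma Admissible.exists_fderiv_ne_zero [NeZero n] (hu : Admissible n p s q u)
    (hu_ne : u ≠ 0) : ∃ x, fderiv ℝ u x ≠ 0 := by
  obtain ⟨x₀, hx₀⟩ := Function.ne_iff.mp hu_ne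
  by_contra! h
  have hconst : ∀ x, u x = u x₀ :=
    fun x => is_const_of_fderiv_eq_zero (hu.smooth.differentiable one_ne_zero) h x x₀
  have hint : Integrable (fun _ : Euc n => |u x₀| ^ q) := by simpa only [hconst] using hu.int_q
  rcases integrable_const_iff.1 hint with hzero | hfinite
  · exact (Real.rpow_pos_of_pos (abs_pos.2 hx₀) q).ne' hzero
  · exact measure_ne_top (volume : Measure (Euc n)) univ
      (measure_univ_of_isAddLeftInvariant volume)

lemma Admissible.gradLpNorm_pos [NeZero n] (hp : 0 < p) (hu : Admissible n p s q u)
    (hu_ne : u ≠ 0) : 0 < gradLpNorm n p u := by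
  obtain ⟨x₁, hx₁⟩ := hu.exists_fderiv_ne_zero hu_ne
  refine Real.rpow_pos_of_pos (integral_pos_of_continuous
    ((hu.smooth.continuous_fderiv one_ne_zero).norm.rpow_const fun _ => .inr hp.le)
    (fun x => Real.rpow_nonneg (norm_nonneg _) _) hu.int_grad (x₀ := x₁) ?_) _
  exact (Real.rpow_pos_of_pos (norm_pos_iff.2 hx₁) p).ne'

end Positivity

def gradScalingExp (n : ℕ) (p q : ℝ) : ℝ := p * (n / q + 1) - n

def lpScalingExp (n : ℕ) (s q : ℝ) : ℝ := n - s * (n / q)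

def gnsExp (n : ℕ) (p s q : ℝ) : ℝ := q * (n * p + p * s - n * s) / (n * p + p * q - n * s)

def eta0 (n : ℕ) (p s q : ℝ) : ℝ := scalingConst (gradScalingExp n p q) (lpScalingExp n s q)

lemma Ffun_rescale {n : ℕ} {p s q lam : ℝ} {u : Euc n → ℝ} (hu : Differentiable ℝ u)
    (hlam : 0 < lam) :
    Ffun n p s (rescale n q lam u) = (∫ x, ‖fderiv ℝ u x‖ ^ p) * lam ^ gradScalingExp n p q +
      (∫ x, |u x| ^ s) * lam ^ (-lpScalingExp n s q) := by
  rw [Ffun, integral_norm_fderiv_rescale_rpow hlam hu, integral_abs_rescale_rpow hlam,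
    gradScalingExp, lpScalingExp, neg_sub, mul_comm, mul_comm (lam ^ _)]

namespace Params

variable {n : ℕ} {p s q θ : ℝ}

lemma q_pos (hP : Params n p s q θ) : 0 < q := by linarith [hP.hs, hP.hsq]

lemma q_mul_sub_lt (hP : Params n p s q θ) : q * (n - p) < n * p :=
  (lt_div_iff₀ (by linarith [hP.hpn])).1 hP.hq

lemma theta_mul_eq (hP : Params n p s q θ) :
    θ * (q * (n * p - n * s + p * s)) = n * p * (q - s) := by
  have h := hP.hθ
  have := hP.q_pos; have := hP.hs; have := hP.hp; have := hP.hpn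
  have : (n : ℝ) - p ≠ 0 := by linarith
  have : (n : ℝ) ≠ 0 := by linarith
  field_simp at h
  linear_combination -h

lemma gradScalingExp_eq (hP : Params n p s q θ) :
    gradScalingExp n p q = (n * p + p * q - n * q) / q := by
  have := hP.q_pos
  rw [gradScalingExp]; field_simp

lemma lpScalingExp_eq (hP : Params n p s q θ) : lpScalingExp n s q = n * (q - s) / q := by
  have := hP.q_pos
  rw [lpScalingExp]; field_simp

lemma gradScalingExp_add_lpScalingExp (hP : Params n p s q θ) :
    gradScalingExp n p q + lpScalingExp n s q = (n * p + p * q - n * s) / q := by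
  rw [hP.gradScalingExp_eq, hP.lpScalingExp_eq]
  ring

lemma gradScalingExp_pos (hP : Params n p s q θ) : 0 < gradScalingExp n p q := by
  rw [hP.gradScalingExp_eq]
  exact div_pos (by linarith [hP.q_mul_sub_lt]) hP.q_pos

lemma lpScalingExp_pos (hP : Params n p s q θ) : 0 < lpScalingExp n s q := by
  rw [hP.lpScalingExp_eq]
  exact div_pos (mul_pos (by linarith [hP.hp, hP.hpn]) (by linarith [hP.hsq])) hP.q_pos

lemma gnsExp_denom_pos (hP : Params n p s q θ) : 0 < n * p + p * q - n * s := by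
  nlinarith [hP.hp, hP.hsq, hP.q_mul_sub_lt]

lemma gnsExp_pos (hP : Params n p s q θ) : 0 < gnsExp n p s q := by
  have := hP.hp; have := hP.hpn; have := hP.hsq; have := hP.q_mul_sub_lt; have := hP.q_pos
  have : s * (n - p) < n * p := by nlinarith
  exact div_pos (by nlinarith) hP.gnsExp_denom_pos

lemma gnsExp_mul_theta (hP : Params n p s q θ) :
    1 / p * θ * gnsExp n p s q =
      lpScalingExp n s q / (gradScalingExp n p q + lpScalingExp n s q) := by
  have : p ≠ 0 := by linarith [hP.hp]
  rw [hP.gradScalingExp_add_lpScalingExp, hP.lpScalingExp_eq, gnsExp,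
    div_div_div_cancel_right₀ hP.q_pos.ne']
  calc 1 / p * θ * (q * (n * p + p * s - n * s) / (n * p + p * q - n * s))
      = θ * (q * (n * p - n * s + p * s)) / p / (n * p + p * q - n * s) := by ring
    _ = n * (q - s) / (n * p + p * q - n * s) := by rw [hP.theta_mul_eq]; field_simp

lemma gnsExp_mul_one_sub_theta (hP : Params n p s q θ) :
    1 / s * (1 - θ) * gnsExp n p s q =
      gradScalingExp n p q / (gradScalingExp n p q + lpScalingExp n s q) := by
  have : s ≠ 0 := by linarith [hP.hs]
  rw [hP.gradScalingExp_add_lpScalingExp, hP.gradScalingExp_eq, gnsExp,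
    div_div_div_cancel_right₀ hP.q_pos.ne']
  calc 1 / s * (1 - θ) * (q * (n * p + p * s - n * s) / (n * p + p * q - n * s))
      = (q * (n * p - n * s + p * s) - θ * (q * (n * p - n * s + p * s))) / s /
          (n * p + p * q - n * s) := by ring
    _ = (n * p + p * q - n * q) / (n * p + p * q - n * s) := by
      rw [hP.theta_mul_eq]; field_simp; ring

lemma eta0_pos (hP : Params n p s q θ) : 0 < eta0 n p s q := by
  have := hP.gradScalingExp_pos; have := hP.lpScalingExp_pos
  rw [eta0, scalingConst]
  positivity

end Params

lemma pos_of_rpow_pos {x y : ℝ} (hx : 0 ≤ x) (hy : y ≠ 0) (h : 0 < x ^ y) : 0 < x :=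
  hx.lt_of_ne fun hx0 => by simp [← hx0, Real.zero_rpow hy] at h

theorem isLeast_Ffun_rescale {n : ℕ} {p s q θ : ℝ} (hP : Params n p s q θ) {u : Euc n → ℝ}
    (hu : Admissible n p s q u) (hgrad : 0 < gradLpNorm n p u) (hlp : 0 < lpNorm n s u) :
    IsLeast {r | ∃ lam > (0 : ℝ), r = Ffun n p s (rescale n q lam u)}
      (eta0 n p s q * Gfun n p s θ u ^ gnsExp n p s q) := by
  have hp : p ≠ 0 := by linarith [hP.hp]
  have hs : s ≠ 0 := by linarith [hP.hs]
  set A := ∫ x, ‖fderiv ℝ u x‖ ^ p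
  set B := ∫ x, |u x| ^ s
  have hA : 0 < A := pos_of_rpow_pos (integral_nonneg fun x => Real.rpow_nonneg (norm_nonneg _) _)
    (one_div_ne_zero hp) hgrad
  have hB : 0 < B := pos_of_rpow_pos (integral_nonneg fun x => Real.rpow_nonneg (abs_nonneg _) _)
    (one_div_ne_zero hs) hlp
  have horbit : {r | ∃ lam > (0 : ℝ), r = Ffun n p s (rescale n q lam u)} =
      {r | ∃ l > (0 : ℝ), r = A * l ^ gradScalingExp n p q + B * l ^ (-lpScalingExp n s q)} := by
    ext r
    refine exists_congr fun l => and_congr_right fun hl => ?_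
    rw [Ffun_rescale (hu.smooth.differentiable one_ne_zero) hl]
  have hG : Gfun n p s θ u ^ gnsExp n p s q =
      A ^ (lpScalingExp n s q / (gradScalingExp n p q + lpScalingExp n s q)) *
        B ^ (gradScalingExp n p q / (gradScalingExp n p q + lpScalingExp n s q)) := by
    rw [Gfun, gradLpNorm, _root_.lpNorm, ← Real.rpow_mul hA.le, ← Real.rpow_mul hB.le,
      Real.mul_rpow (by positivity) (by positivity), ← Real.rpow_mul hA.le, ← Real.rpow_mul hB.le,
      hP.gnsExp_mul_theta, hP.gnsExp_mul_one_sub_theta]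
  rw [horbit, hG, eta0]
  exact isLeast_mul_rpow_add_mul_rpow_neg hP.gradScalingExp_pos hP.lpScalingExp_pos hA hB

section UnitSphere

variable {n : ℕ} {p s q θ : ℝ}

lemma GNSRatio_nonneg (u : Euc n → ℝ) : 0 ≤ GNSRatio n p s q θ u := by
  have h : ∀ {f : Euc n → ℝ} {r : ℝ}, 0 ≤ f → 0 ≤ (∫ x, f x ^ r) ^ (1 / r) :=
    fun hf => Real.rpow_nonneg (integral_nonneg fun x => Real.rpow_nonneg (hf x) _) _
  exact div_nonneg (mul_nonneg (Real.rpow_nonneg (h fun x => norm_nonneg (fderiv ℝ u x)) _)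
    (Real.rpow_nonneg (h fun x => abs_nonneg (u x)) _)) (h fun x => abs_nonneg (u x))

lemma eta0_mul_Gfun_rpow_le_Ffun (hP : Params n p s q θ) {u : Euc n → ℝ}
    (hu : Admissible n p s q u) (hgrad : 0 < gradLpNorm n p u) (hlp : 0 < lpNorm n s u) :
    eta0 n p s q * Gfun n p s θ u ^ gnsExp n p s q ≤ Ffun n p s u :=
  (isLeast_Ffun_rescale hP hu hgrad hlp).2 ⟨1, one_pos, by rw [rescale_one]⟩

lemma eta0_mul_GNSRatio_rpow_mem (hP : Params n p s q θ) {u : Euc n → ℝ}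
    (hu : Admissible n p s q u) (hu_ne : u ≠ 0) :
    eta0 n p s q * GNSRatio n p s q θ u ^ gnsExp n p s q ∈
      {r | ∃ v : Euc n → ℝ, Admissible n p s q v ∧ lpNorm n q v = 1 ∧ r = Ffun n p s v} := by
  have : NeZero n := ⟨by linarith [hP.hn]⟩
  have hp : 0 < p := by linarith [hP.hp]
  have hs : 0 < s := by linarith [hP.hs]
  have hdiff := hu.smooth.differentiable one_ne_zero
  have hq_pos := lpNorm_pos hP.q_pos hu.smooth.continuous hu.int_q hu_ne
  set c := (lpNorm n q u)⁻¹
  have hc : 0 < c := inv_pos.2 hq_pos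
  have hv := hu.const_mul c
  have hvq : lpNorm n q (fun x => c * u x) = 1 := by
    rw [lpNorm_const_mul hP.q_pos.ne', abs_of_pos hc, inv_mul_cancel₀ hq_pos.ne']
  have hv_grad : 0 < gradLpNorm n p (fun x => c * u x) := by
    rw [gradLpNorm_const_mul hp.ne' c hdiff, abs_of_pos hc]
    exact mul_pos hc (hu.gradLpNorm_pos hp hu_ne)
  have hv_lp : 0 < lpNorm n s (fun x => c * u x) := by
    rw [lpNorm_const_mul hs.ne', abs_of_pos hc]
    exact mul_pos hc (lpNorm_pos hs hu.smooth.continuous hu.int_s hu_ne)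
  have hratio : GNSRatio n p s q θ u = Gfun n p s θ (fun x => c * u x) := by
    rw [Gfun_const_mul hp.ne' hs.ne' c hdiff, abs_of_pos hc, mul_comm, GNSRatio, Gfun,
      div_eq_mul_inv]
  obtain ⟨lam, hlam, hval⟩ := (isLeast_Ffun_rescale hP hv hv_grad hv_lp).1
  exact ⟨_, hv.rescale hlam, by rw [lpNorm_rescale hP.q_pos.ne' hlam, hvq], by rw [hratio, hval]⟩

theorem sInf_Ffun_lpNorm_eq_one (hP : Params n p s q θ) :
    sInf {r | ∃ u : Euc n → ℝ, Admissible n p s q u ∧ lpNorm n q u = 1 ∧ r = Ffun n p s u} =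
      eta0 n p s q * GNSconst n p s q θ ^ gnsExp n p s q := by
  have : NeZero n := ⟨by linarith [hP.hn]⟩
  have hp : 0 < p := by linarith [hP.hp]
  have hs : 0 < s := by linarith [hP.hs]
  have hk := hP.gnsExp_pos
  set R := {c | ∃ u : Euc n → ℝ, Admissible n p s q u ∧ u ≠ 0 ∧ c = GNSRatio n p s q θ u}
  set f : ℝ → ℝ := fun x => eta0 n p s q * x ^ gnsExp n p s q
  have hR_nonneg : ∀ c ∈ R, 0 ≤ c := by
    rintro c ⟨u, -, -, rfl⟩
    exact GNSRatio_nonneg u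
  have hf_mono : MonotoneOn f R := fun x hx y _ hxy =>
    mul_le_mul_of_nonneg_left (Real.rpow_le_rpow (hR_nonneg x hx) hxy hk.le) hP.eta0_pos.le
  have hf_cont : Continuous f := continuous_const.mul (Real.continuous_rpow_const hk.le)
  have hf_sInf : f (sInf R) = sInf (f '' R) := by
    rcases R.eq_empty_or_nonempty with hR | hR
    · simp [hR, f, Real.zero_rpow hk.ne']
    · exact hf_mono.map_csInf_of_continuousWithinAt hf_cont.continuousWithinAt hR ⟨0, hR_nonneg⟩
  rw [show eta0 n p s q * GNSconst n p s q θ ^ gnsExp n p s q = f (sInf R) from rfl, hf_sInf]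
  refine csInf_eq_csInf_of_forall_exists_le ?_ ?_
  · rintro _ ⟨u, hu, hu_q, rfl⟩
    have hu_ne : u ≠ 0 := by
      rintro rfl
      exact zero_ne_one ((lpNorm_zero hP.q_pos.ne').symm.trans hu_q)
    refine ⟨_, ⟨_, ⟨u, hu, hu_ne, rfl⟩, rfl⟩, ?_⟩
    rw [show f (GNSRatio n p s q θ u) = eta0 n p s q * Gfun n p s θ u ^ gnsExp n p s q by
      simp only [f, GNSRatio, Gfun, hu_q, div_one]]
    exact eta0_mul_Gfun_rpow_le_Ffun hP hu (hu.gradLpNorm_pos hp hu_ne)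
      (lpNorm_pos hs hu.smooth.continuous hu.int_s hu_ne)
  · rintro _ ⟨_, ⟨u, hu, hu_ne, rfl⟩, rfl⟩
    exact ⟨_, eta0_mul_GNSRatio_rpow_mem hP hu hu_ne, le_rfl⟩

end UnitSphere

/-- there is `η₀ > 0` with: (a) for every admissible `u` with nonzero gradient
and `L^s` norm, `inf_{λ>0} F(τ_λ u) = η₀ G(u)^k` and the infimum is attained; (b) consequently
`φ(1) = inf {F(u) : ‖u‖_q = 1} = η₀ G^k`. -/
theorem stmt_19 (n : ℕ) (p s q θ : ℝ) (hP : Params n p s q θ) :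
    ∃ η₀ > (0 : ℝ),
      (∀ u : Euc n → ℝ, Admissible n p s q u →
        0 < gradLpNorm n p u → 0 < lpNorm n s u →
        sInf {r | ∃ lam > (0 : ℝ), r = Ffun n p s (rescale n q lam u)} =
          η₀ * Gfun n p s θ u ^ (q * (n * p + p * s - n * s) / (n * p + p * q - n * s)) ∧
        ∃ lam > (0 : ℝ), Ffun n p s (rescale n q lam u) =
          η₀ * Gfun n p s θ u ^ (q * (n * p + p * s - n * s) / (n * p + p * q - n * s))) ∧
      sInf {r | ∃ u : Euc n → ℝ, Admissible n p s q u ∧ lpNorm n q u = 1 ∧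
          r = Ffun n p s u} =
        η₀ * GNSconst n p s q θ ^
          (q * (n * p + p * s - n * s) / (n * p + p * q - n * s)) := by
  refine ⟨eta0 n p s q, hP.eta0_pos, fun u hu hgrad hlp => ?_, sInf_Ffun_lpNorm_eq_one hP⟩
  have hleast := isLeast_Ffun_rescale hP hu hgrad hlp
  obtain ⟨lam, hlam, hval⟩ := hleast.1
  exact ⟨hleast.csInf_eq, lam, hlam, hval.symm⟩

end
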